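/- Let β = (β_0,...,β_{2k}) ∈ ℝ^{2k+1} with β_0 > 0. Then there exists a positive Borel measure μ on ℝ with β_i = ∫ x^i dμ for i = 0,...,2k if and only if β is positively recursively generated. -/

import Mathlib

open Matrix MeasureTheory

noncomputable section

/-- The `(k+1) × (k+1)` Hankel matrix `A_v = (v_{i+j})_{i,j=0}^k`. -/
def hankel (k : ℕ) (v : ℕ → ℝ) : Matrix (Fin (k+1)) (Fin (k+1)) ℝ :=
  Matrix.of fun i j => v (i.1 + j.1)

/-- The top-left `r × r` corner `A_v(r-1) = (v_{i+j})_{i,j=0}^{r-1}`. -/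
def hcorner (v : ℕ → ℝ) (r : ℕ) : Matrix (Fin r) (Fin r) ℝ :=
  Matrix.of fun i j => v (i.1 + j.1)

/-- The `(j+1)`-th column of the Hankel matrix `A_v`. -/
def hcol (k : ℕ) (v : ℕ → ℝ) (j : ℕ) : Fin (k+1) → ℝ :=
  fun i => v (i.1 + j)

/-- `r = rank v`: column `v_r` lies in the span of the preceding columns, and `r`
is minimal with this property. -/
def seqRank (k : ℕ) (v : ℕ → ℝ) (r : ℕ) : Prop :=
  hcol k v r ∈ Submodule.span ℝ (hcol k v '' {j | j < r}) ∧
  ∀ i < r, hcol k v i ∉ Submodule.span ℝ (hcol k v '' {j | j < i})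

/-- `φ = A_v(r-1)⁻¹ (v_r,…,v_{2r-1})ᵀ`. -/
def phi (v : ℕ → ℝ) (r : ℕ) : Fin r → ℝ :=
  (hcorner v r)⁻¹.mulVec fun i => v (r + i.1)

/-- `v` is positively recursively generated. -/
def PRG (k : ℕ) (v : ℕ → ℝ) : Prop :=
  (hankel k v).PosDef ∨
  ∃ r, r ≤ k ∧ seqRank k v r ∧ (hcorner v r).PosDef ∧
    ∀ j, r ≤ j → j ≤ 2*k → v j = ∑ i : Fin r, phi v r i * v (j - r + i.1)

/-!
If `μ` represents `β`, the corner `A_β(n-1)` with `n ≤ k+1` is the Gram matrix of the form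
`c ↦ ∫ (∑ cᵢ xⁱ)² dμ`. So it is positive semidefinite, and a kernel vector `c` gives a polynomial
vanishing `μ`-a.e., whence `∑ cᵢ β_{m+i} = 0` for all `m` with `m + n ≤ 2k+1`. Applied to the first
column depending on its predecessors this is the recursion, and by minimality of `r` the corner
`A_β(r-1)` has trivial kernel.

Conversely, let `A = A_β(r-1)` be positive definite and `C` the matrix shifting windows
`(β_j, …, β_{j+r-1})` of a solution of the recursion. Then `C A = (β_{i+j+1})` is symmetric, so
writing `A = BᵀB` the matrix `B⁻ᵀ C Bᵀ` is symmetric too; diagonalizing it gives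
`β_j = ∑ₜ wₜ² λₜʲ`, the moments of `∑ₜ wₜ² δ_{λₜ}`. A positive definite Hankel matrix is the case
`r = k+1`, the free value `β_{2k+1}` entering `φ`.
-/

open scoped NNReal

lemma Matrix.PosSemidef.exists_mulVec_eq_zero_of_not_posDef {ι : Type*} [Fintype ι]
    [DecidableEq ι] {A : Matrix ι ι ℝ} (hA : A.PosSemidef) (h : ¬ A.PosDef) :
    ∃ v ≠ 0, A *ᵥ v = 0 := by
  rw [hA.posDef_iff_isUnit, isUnit_iff_isUnit_det, isUnit_iff_ne_zero, not_not] at h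
  exact exists_mulVec_eq_zero_iff.2 h

lemma linearIndepOn_Iio_of_notMem_span {K V : Type*} [DivisionRing K] [AddCommGroup V]
    [Module K V] {f : ℕ → V} {n : ℕ} (h : ∀ ℓ < n, f ℓ ∉ Submodule.span K (f '' Set.Iio ℓ)) :
    LinearIndepOn K f (Set.Iio n) := by
  induction n with
  | zero => simp
  | succ n ih =>
    rw [← Order.succ_eq_add_one, Order.Iio_succ_eq_insert, linearIndepOn_insert (by simp)]
    exact ⟨ih fun ℓ hℓ => h ℓ (by omega), h n (by omega)⟩

lemma exists_mem_span_image_Iio_of_sum_smul_eq_zero {K V : Type*} [DivisionRing K]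
    [AddCommGroup V] [Module K V] {f : ℕ → V} {n : ℕ} {c : Fin n → K} (hc : c ≠ 0)
    (h : ∑ i, c i • f i = 0) : ∃ ℓ < n, f ℓ ∈ Submodule.span K (f '' Set.Iio ℓ) := by
  by_contra! hf
  have hlin := (linearIndepOn_Iio_of_notMem_span hf).comp (fun i : Fin n => ⟨i, i.2⟩)
    fun i j hij => Fin.ext (congrArg Subtype.val hij)
  exact hc (funext (Fintype.linearIndependent_iff.1 hlin c h))

lemma integral_sum_smul_dirac {ι : Type*} [Fintype ι] (w : ι → ℝ≥0) (x : ι → ℝ) (f : ℝ → ℝ) :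
    Integrable f (∑ i, w i • Measure.dirac (x i)) ∧
      ∫ t, f t ∂(∑ i, w i • Measure.dirac (x i)) = ∑ i, w i * f (x i) := by
  have hf : ∀ i, Integrable f (w i • Measure.dirac (x i)) := fun i =>
    (integrable_dirac enorm_lt_top).smul_measure ENNReal.coe_ne_top
  refine ⟨integrable_finsetSum_measure.2 fun i _ => hf i, ?_⟩
  simp [integral_finsetSum_measure fun i _ => hf i, integral_smul_nnreal_measure, NNReal.smul_def]

namespace Matrix

variable {ι : Type*} [Fintype ι] [DecidableEq ι]

lemma IsHermitian.dotProduct_pow_mulVec {T : Matrix ι ι ℝ} (hT : T.IsHermitian) (v : ι → ℝ)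
    (j : ℕ) : v ⬝ᵥ (T ^ j *ᵥ v) =
      ∑ i, (star (hT.eigenvectorUnitary : Matrix ι ι ℝ) *ᵥ v) i ^ 2 * hT.eigenvalues i ^ j := by
  set U : Matrix ι ι ℝ := (hT.eigenvectorUnitary : Matrix ι ι ℝ)
  have hpow : T ^ j = U * diagonal (hT.eigenvalues ^ j) * star U := by
    conv_lhs => rw [hT.spectral_theorem]
    rw [← map_pow, diagonal_pow, Unitary.conjStarAlgAut_apply]
    rfl
  have hvU : v ᵥ* U = star U *ᵥ v := by
    rw [← vecMul_transpose, ← conjTranspose_eq_transpose_of_trivial, star_eq_conjTranspose,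
      conjTranspose_conjTranspose]
  rw [hpow, ← mulVec_mulVec, ← mulVec_mulVec, dotProduct_mulVec, hvU]
  simp only [dotProduct, mulVec_diagonal, Pi.pow_apply]
  exact Finset.sum_congr rfl fun i _ => by ring

lemma IsHermitian.exists_measure_integral_pow_eq {T : Matrix ι ι ℝ} (hT : T.IsHermitian)
    (v : ι → ℝ) : ∃ μ : Measure ℝ, ∀ j : ℕ,
      Integrable (fun t : ℝ => t ^ j) μ ∧ ∫ t, t ^ j ∂μ = v ⬝ᵥ (T ^ j *ᵥ v) := by
  set w := star (hT.eigenvectorUnitary : Matrix ι ι ℝ) *ᵥ v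
  refine ⟨∑ i, (w i ^ 2).toNNReal • Measure.dirac (hT.eigenvalues i), fun j => ?_⟩
  obtain ⟨hint, heq⟩ := integral_sum_smul_dirac (fun i => (w i ^ 2).toNNReal)
    hT.eigenvalues (fun t => t ^ j)
  refine ⟨hint, heq.trans ?_⟩
  simp [Real.coe_toNNReal _ (sq_nonneg _), hT.dotProduct_pow_mulVec v j, w]

lemma PosDef.exists_measure_integral_pow_eq {A C : Matrix ι ι ℝ} (hA : A.PosDef)
    (hCA : C * A = A * Cᵀ) (x : ι → ℝ) : ∃ μ : Measure ℝ, ∀ j : ℕ,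
      Integrable (fun t : ℝ => t ^ j) μ ∧ ∫ t, t ^ j ∂μ = x ⬝ᵥ ((C ^ j * A) *ᵥ x) := by
  obtain ⟨B, rfl⟩ : ∃ B : Matrix ι ι ℝ, A = Bᵀ * B := by
    open scoped MatrixOrder in
    obtain ⟨B, hB⟩ := CStarAlgebra.nonneg_iff_eq_star_mul_self.mp hA.posSemidef.nonneg
    exact ⟨B, by rw [hB, star_eq_conjTranspose, conjTranspose_eq_transpose_of_trivial]⟩
  have hB : IsUnit B.det := by
    have := (isUnit_iff_isUnit_det _).1 hA.isUnit
    rw [det_mul, det_transpose] at this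
    exact isUnit_of_mul_isUnit_right this
  have hBt : IsUnit Bᵀ.det := by rwa [det_transpose]
  set T := Bᵀ⁻¹ * C * Bᵀ
  have hBT : Bᵀ * T = C * Bᵀ := by simp only [T, ← mul_assoc, mul_nonsing_inv _ hBt, one_mul]
  have hT : T.IsHermitian := by
    refine (conjTranspose_eq_transpose_of_trivial T).trans <|
      ((isUnit_iff_isUnit_det _).2 hBt).mul_left_cancel ?_
    rw [hBT]
    simp only [T, transpose_mul, transpose_transpose, transpose_nonsing_inv]
    calc Bᵀ * (B * (Cᵀ * B⁻¹)) = (Bᵀ * B * Cᵀ) * B⁻¹ := by simp only [mul_assoc]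
      _ = C * Bᵀ * (B * B⁻¹) := by rw [← hCA]; simp only [mul_assoc]
      _ = C * Bᵀ := by rw [mul_nonsing_inv _ hB, mul_one]
  obtain ⟨μ, hμ⟩ := hT.exists_measure_integral_pow_eq (B *ᵥ x)
  refine ⟨μ, fun j => ⟨(hμ j).1, ?_⟩⟩
  rw [(hμ j).2, ← mul_assoc, ← (SemiconjBy.pow_right hBT j).eq, mul_assoc, ← mulVec_mulVec,
    dotProduct_mulVec x, vecMul_transpose, mulVec_mulVec]

end Matrix

section hcorner

variable (γ : ℕ → ℝ) (n : ℕ)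

lemma hcorner_transpose : (hcorner γ n)ᵀ = hcorner γ n := by
  ext i j
  simp [hcorner, add_comm]

variable {γ n}

lemma hcorner_mulVec_apply (c : Fin n → ℝ) (m : Fin n) :
    (hcorner γ n *ᵥ c) m = ∑ i, c i * γ (m + i) := by
  simp [hcorner, mulVec, dotProduct, mul_comm]

lemma sum_smul_hcol_apply {k : ℕ} (c : Fin n → ℝ) (m : Fin (k + 1)) :
    (∑ i, c i • hcol k γ i) m = ∑ i, c i * γ (m + i) := by
  simp [hcol]

lemma hcorner_mulVec_phi (h : IsUnit (hcorner γ n).det) :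
    hcorner γ n *ᵥ phi γ n = fun i : Fin n => γ (n + i) := by
  rw [phi, mulVec_mulVec, mul_nonsing_inv _ h, one_mulVec]

lemma eq_sum_phi_mul (h : IsUnit (hcorner γ n).det) {j : ℕ} (h₁ : n ≤ j) (h₂ : j < 2 * n) :
    γ j = ∑ i : Fin n, phi γ n i * γ (j - n + i) := by
  have := congrFun (hcorner_mulVec_phi h) ⟨j - n, by omega⟩
  simp only [mulVec, dotProduct, hcorner, of_apply] at this
  rw [show n + (j - n) = j by omega] at this
  rw [← this]
  exact Finset.sum_congr rfl fun i _ => mul_comm _ _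

end hcorner

/-- Transpose of the companion matrix of `v_{j+n} = ∑ᵢ φᵢ v_{j+i}`: it maps a window
`(v_j, …, v_{j+n-1})` of a solution to `(v_{j+1}, …, v_{j+n})`. -/
def shiftMatrix {n : ℕ} (φ : Fin n → ℝ) : Matrix (Fin n) (Fin n) ℝ :=
  of fun i j => if (i : ℕ) + 1 = n then φ j else if (j : ℕ) = i + 1 then 1 else 0

section shiftMatrix

variable {n : ℕ} (φ : Fin n → ℝ) (u : Fin n → ℝ)

lemma shiftMatrix_mulVec_of_lt {i : Fin n} (hi : (i : ℕ) + 1 < n) :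
    (shiftMatrix φ *ᵥ u) i = u ⟨i + 1, hi⟩ := by
  rw [mulVec, dotProduct, Finset.sum_eq_single ⟨i + 1, hi⟩]
  · simp [shiftMatrix, hi.ne]
  · intro j _ hj
    simp [shiftMatrix, hi.ne, Fin.ext_iff.not.mp hj]
  · simp

lemma shiftMatrix_mulVec_of_eq {i : Fin n} (hi : (i : ℕ) + 1 = n) :
    (shiftMatrix φ *ᵥ u) i = φ ⬝ᵥ u := by
  simp [mulVec, dotProduct, shiftMatrix, hi]

lemma shiftMatrix_pow_mulVec {g : ℕ → ℝ} {N : ℕ}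
    (hg : ∀ j, n ≤ j → j ≤ N → g j = ∑ i : Fin n, φ i * g (j - n + i)) (j : ℕ) (m : Fin n)
    (hm : m + j ≤ N) : (shiftMatrix φ ^ j *ᵥ fun i => g i) m = g (m + j) := by
  induction j generalizing m with
  | zero => simp
  | succ j ih =>
    rw [pow_succ', ← mulVec_mulVec]
    rcases (Nat.succ_le_of_lt m.2).lt_or_eq with hlt | heq
    · rw [shiftMatrix_mulVec_of_lt φ _ hlt, ih _ (by dsimp only; omega)]
      congr 1
      dsimp only
      omega
    · rw [shiftMatrix_mulVec_of_eq φ _ heq, hg (m + (j + 1)) (by omega) hm]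
      refine Finset.sum_congr rfl fun i _ => ?_
      rw [ih i (by omega)]
      congr 2
      omega

end shiftMatrix

lemma shiftMatrix_phi_mul_hcorner {γ : ℕ → ℝ} {n : ℕ} (h : IsUnit (hcorner γ n).det) :
    shiftMatrix (phi γ n) * hcorner γ n = hcorner γ n * (shiftMatrix (phi γ n))ᵀ := by
  have hshift : shiftMatrix (phi γ n) * hcorner γ n = of fun a b : Fin n => γ (a + b + 1) := by
    ext a b
    have hrec : ∀ j, n ≤ j → j ≤ n →
        γ (j + b) = ∑ i : Fin n, phi γ n i * γ (j - n + i + b) := fun j h₁ h₂ => by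
      obtain rfl : j = n := le_antisymm h₂ h₁
      simpa [add_comm _ (b : ℕ)] using eq_sum_phi_mul h (j := j + b) (by omega) (by omega)
    have := shiftMatrix_pow_mulVec (phi γ n) (g := fun t => γ (t + b)) hrec 1 a (by omega)
    simpa [mul_apply, mulVec, dotProduct, hcorner, add_right_comm] using this
  have hsymm : (of fun a b : Fin n => γ (a + b + 1))ᵀ = of fun a b : Fin n => γ (a + b + 1) := by
    ext a b
    simp [add_comm (b : ℕ)]
  rw [hshift, ← hsymm, ← hshift, transpose_mul, hcorner_transpose]

lemma exists_measure_of_posDef_hcorner {γ : ℕ → ℝ} {n N : ℕ} (hA : (hcorner γ n).PosDef)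
    (hrec : ∀ j, n ≤ j → j ≤ N → γ j = ∑ i : Fin n, phi γ n i * γ (j - n + i)) :
    ∃ μ : Measure ℝ, ∀ j ≤ N, Integrable (fun t : ℝ => t ^ j) μ ∧ γ j = ∫ t, t ^ j ∂μ := by
  rcases Nat.eq_zero_or_pos n with rfl | hn
  · exact ⟨0, fun j hj => by simp [hrec j (Nat.zero_le j) hj]⟩
  have hdet := (isUnit_iff_isUnit_det _).1 hA.isUnit
  obtain ⟨μ, hμ⟩ := hA.exists_measure_integral_pow_eq (shiftMatrix_phi_mul_hcorner hdet)
    (Pi.single ⟨0, hn⟩ 1)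
  refine ⟨μ, fun j hj => ⟨(hμ j).1, ?_⟩⟩
  rw [(hμ j).2]
  have := shiftMatrix_pow_mulVec (phi γ n) hrec j ⟨0, hn⟩ (by simpa using hj)
  simpa [mul_apply, mulVec, dotProduct, hcorner, Pi.single_apply] using this.symm

def polyEval {n : ℕ} (c : Fin n → ℝ) (x : ℝ) : ℝ := ∑ i, c i * x ^ (i : ℕ)

section RepresentingMeasure

variable {k : ℕ} {β : ℕ → ℝ} {μ : Measure ℝ} {n r : ℕ}
  (hμ : ∀ i ≤ 2 * k, Integrable (fun x : ℝ => x ^ i) μ ∧ β i = ∫ x, x ^ i ∂μ)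
include hμ

lemma integral_pow_mul_polyEval (c : Fin n → ℝ) {m : ℕ} (hm : m + n ≤ 2 * k + 1) :
    Integrable (fun x => x ^ m * polyEval c x) μ ∧
      ∫ x, x ^ m * polyEval c x ∂μ = ∑ i, c i * β (m + i) := by
  have hfun : (fun x => x ^ m * polyEval c x) = fun x => ∑ i, c i * x ^ (m + i : ℕ) := by
    ext x
    simp only [polyEval, Finset.mul_sum, pow_add]
    exact Finset.sum_congr rfl fun i _ => by ring
  have hint : ∀ i : Fin n, Integrable (fun x => c i * x ^ (m + i : ℕ)) μ := fun i =>
    (hμ (m + i) (by omega)).1.const_mul _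
  rw [hfun, integral_finsetSum _ fun i _ => hint i]
  refine ⟨integrable_finsetSum _ fun i _ => hint i, Finset.sum_congr rfl fun i _ => ?_⟩
  rw [integral_const_mul, (hμ (m + i) (by omega)).2]

lemma integral_polyEval_sq (hn : n ≤ k + 1) (c : Fin n → ℝ) :
    Integrable (fun x => polyEval c x ^ 2) μ ∧
      ∫ x, polyEval c x ^ 2 ∂μ = c ⬝ᵥ (hcorner β n *ᵥ c) := by
  have hfun : (fun x => polyEval c x ^ 2) = fun x => ∑ i, c i * (x ^ (i : ℕ) * polyEval c x) := by
    ext x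
    rw [sq, polyEval, Finset.sum_mul]
    exact Finset.sum_congr rfl fun i _ => by ring
  have hint : ∀ i : Fin n, Integrable (fun x => c i * (x ^ (i : ℕ) * polyEval c x)) μ :=
    fun i => (integral_pow_mul_polyEval hμ c (by omega)).1.const_mul _
  rw [hfun, integral_finsetSum _ fun i _ => hint i]
  refine ⟨integrable_finsetSum _ fun i _ => hint i, Finset.sum_congr rfl fun i _ => ?_⟩
  rw [integral_const_mul, (integral_pow_mul_polyEval hμ c (by omega)).2, hcorner_mulVec_apply]

lemma posSemidef_hcorner (hn : n ≤ k + 1) : (hcorner β n).PosSemidef := by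
  refine .of_dotProduct_mulVec_nonneg ?_ fun c => ?_
  · rw [IsHermitian, conjTranspose_eq_transpose_of_trivial, hcorner_transpose]
  · rw [star_trivial, ← (integral_polyEval_sq hμ hn c).2]
    exact integral_nonneg fun x => sq_nonneg _

lemma sum_mul_eq_zero_of_hcorner_mulVec_eq_zero (hn : n ≤ k + 1) {c : Fin n → ℝ}
    (hc : hcorner β n *ᵥ c = 0) {m : ℕ} (hm : m + n ≤ 2 * k + 1) : ∑ i, c i * β (m + i) = 0 := by
  obtain ⟨hint, hsq⟩ := integral_polyEval_sq hμ hn c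
  rw [hc, dotProduct_zero, integral_eq_zero_iff_of_nonneg (fun x => sq_nonneg _) hint] at hsq
  have hzero : (fun x => x ^ m * polyEval c x) =ᵐ[μ] 0 := by
    filter_upwards [hsq] with x hx
    simp_all
  rw [← (integral_pow_mul_polyEval hμ c hm).2, integral_eq_zero_of_ae hzero]

lemma sum_smul_hcol_eq_zero_of_hcorner_mulVec_eq_zero (hn : n ≤ k + 1) {c : Fin n → ℝ}
    (hc : hcorner β n *ᵥ c = 0) : ∑ i, c i • hcol k β i = 0 := by
  ext m
  rw [sum_smul_hcol_apply]
  exact sum_mul_eq_zero_of_hcorner_mulVec_eq_zero hμ hn hc (by omega)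

lemma exists_seqRank_le (h : ¬ (hankel k β).PosDef) : ∃ r ≤ k, seqRank k β r := by
  classical
  obtain ⟨c, hc0, hc⟩ := (posSemidef_hcorner hμ le_rfl).exists_mulVec_eq_zero_of_not_posDef h
  obtain ⟨ℓ, hℓ, hmem⟩ := exists_mem_span_image_Iio_of_sum_smul_eq_zero hc0
    (sum_smul_hcol_eq_zero_of_hcorner_mulVec_eq_zero hμ le_rfl hc)
  have hex : ∃ r, hcol k β r ∈ Submodule.span ℝ (hcol k β '' {j | j < r}) := ⟨ℓ, hmem⟩
  exact ⟨Nat.find hex, (Nat.find_le hmem).trans (by omega), Nat.find_spec hex,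
    fun i hi => Nat.find_min hex hi⟩

lemma posDef_hcorner_of_seqRank (hrk : r ≤ k) (hr : seqRank k β r) : (hcorner β r).PosDef := by
  by_contra h
  obtain ⟨c, hc0, hc⟩ :=
    (posSemidef_hcorner hμ (by omega)).exists_mulVec_eq_zero_of_not_posDef h
  obtain ⟨ℓ, hℓ, hmem⟩ := exists_mem_span_image_Iio_of_sum_smul_eq_zero hc0
    (sum_smul_hcol_eq_zero_of_hcorner_mulVec_eq_zero hμ (by omega) hc)
  exact hr.2 ℓ hℓ hmem

lemma eq_sum_phi_mul_of_seqRank (hrk : r ≤ k) (hr : seqRank k β r) {j : ℕ} (h₁ : r ≤ j)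
    (h₂ : j ≤ 2 * k) : β j = ∑ i : Fin r, phi β r i * β (j - r + i) := by
  obtain ⟨d, hd⟩ : ∃ d : Fin r → ℝ, ∑ i, d i • hcol k β i = hcol k β r := by
    have hmem : hcol k β r ∈ Submodule.span ℝ (hcol k β '' Set.Iio r) := hr.1
    rw [← Fin.range_val, ← Set.range_comp] at hmem
    exact (Submodule.mem_span_range_iff_exists_fun ℝ).1 hmem
  have hrow : ∀ m : ℕ, m ≤ k → ∑ i, d i * β (m + i) = β (m + r) := fun m hm => by
    simpa [sum_smul_hcol_apply, hcol] using congrFun hd ⟨m, by omega⟩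
  have hphi : phi β r = d := by
    have hdet := (isUnit_iff_isUnit_det _).1 (posDef_hcorner_of_seqRank hμ hrk hr).isUnit
    have hAd : hcorner β r *ᵥ d = fun m : Fin r => β (r + m) := by
      ext m
      rw [hcorner_mulVec_apply, hrow m (by omega), add_comm]
    rw [phi, ← hAd, mulVec_mulVec, nonsing_inv_mul _ hdet, one_mulVec]
  -- `Fin.snoc (-d) 1` is the coefficient vector of `xʳ - ∑ dᵢ xⁱ`
  have hsnoc : ∀ m : ℕ, ∑ i : Fin (r + 1), (Fin.snoc (-d) 1 : Fin (r + 1) → ℝ) i * β (m + i)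
      = β (m + r) - ∑ i, d i * β (m + i) := fun m => by
    simp [Fin.sum_univ_castSucc, sub_eq_neg_add]
  have hker : hcorner β (r + 1) *ᵥ Fin.snoc (-d) 1 = 0 := by
    ext m
    rw [hcorner_mulVec_apply, hsnoc, hrow m (by omega), sub_self, Pi.zero_apply]
  have hrec := sum_mul_eq_zero_of_hcorner_mulVec_eq_zero hμ (by omega) hker (m := j - r)
    (by omega)
  rw [hsnoc, sub_eq_zero, show j - r + r = j by omega] at hrec
  rw [hphi, hrec]

end RepresentingMeasure

theorem stmt7_general (k : ℕ) (β : ℕ → ℝ) :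
    (∃ μ : Measure ℝ, ∀ i ≤ 2*k,
        Integrable (fun x : ℝ => x ^ i) μ ∧ β i = ∫ x, x ^ i ∂μ) ↔
      PRG k β := by
  constructor
  · rintro ⟨μ, hμ⟩
    refine or_iff_not_imp_left.2 fun hpd => ?_
    obtain ⟨r, hrk, hr⟩ := exists_seqRank_le hμ hpd
    exact ⟨r, hrk, hr, posDef_hcorner_of_seqRank hμ hrk hr,
      fun j h₁ h₂ => eq_sum_phi_mul_of_seqRank hμ hrk hr h₁ h₂⟩
  · rintro (hpd | ⟨r, -, -, hA, hrec⟩)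
    · have hdet := (isUnit_iff_isUnit_det _).1 hpd.isUnit
      exact exists_measure_of_posDef_hcorner (n := k + 1) hpd
        fun j h₁ h₂ => eq_sum_phi_mul hdet h₁ (by omega)
    · exact exists_measure_of_posDef_hcorner hA hrec

theorem stmt7 (k : ℕ) (β : ℕ → ℝ) (hb0 : 0 < β 0) :
    (∃ μ : Measure ℝ, ∀ i ≤ 2*k,
        Integrable (fun x : ℝ => x ^ i) μ ∧ β i = ∫ x, x ^ i ∂μ) ↔
      PRG k β :=
  stmt7_general k β
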